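/- For a permutation g in S_n acting on C^n by the standard permutation representation, twice the age of g equals the index of g, i.e., 2·age(g) = n − (number of g-orbits in {1,…,n}). -/

import Mathlib

/-!
The eigenvalues `ζ ^ a i` of `g` are recovered from the traces of the powers of `g`, which count
fixed points, by discrete Fourier inversion over the `l`-th roots of unity. Since `g⁻¹` has as many
fixed points as `g`, the multiset of exponents is invariant under `c ↦ (l - c) % l`; pairing `c`
with `l - c` gives `2 * ∑ a i = l * #{i | a i ≠ 0}`. The exponent `0` occurs once for each orbit,
because by Burnside's lemma the average number of fixed points of the powers of `g` is the number
of orbits.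
-/

/-- The number of orbits of the cyclic group generated by `g` on `Fin n`. -/
noncomputable def numOrbits {n : ℕ} (g : Equiv.Perm (Fin n)) : ℕ :=
  Nat.card (MulAction.orbitRel.Quotient (Subgroup.zpowers g) (Fin n))

open Finset

theorem Nat.mod_eq_iff_dvd_add_sub {a c l : ℕ} (hc : c < l) : a % l = c ↔ l ∣ a + (l - c) := by
  rw [show a + (l - c) = a + l - c by omega, ← Nat.modEq_iff_dvd' (by omega), Nat.ModEq,
    Nat.mod_eq_of_lt hc, Nat.add_mod_right, eq_comm]

theorem Nat.sub_mod_modEq_mul_pred {a l : ℕ} (ha : a ≤ l) :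
    (l - a) % l ≡ a * (l - 1) [MOD l] := by
  refine (Nat.mod_modEq _ _).trans (Nat.ModEq.add_right_cancel' a ?_)
  rcases Nat.eq_zero_or_pos l with rfl | hl
  · simp_all
  have : a * (l - 1) + a = a * l := by
    rw [Nat.mul_sub_one, Nat.sub_add_cancel (Nat.le_mul_of_pos_right a hl)]
  rw [Nat.sub_add_cancel ha, this]
  exact (Nat.modEq_zero_iff_dvd.2 dvd_rfl).trans (Nat.modEq_zero_iff_dvd.2 (dvd_mul_left l a)).symm

theorem Nat.add_sub_mod_eq_ite {a l : ℕ} (ha : a < l) :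
    a + (l - a) % l = if a = 0 then 0 else l := by
  split_ifs with h
  · simp [h]
  · rw [Nat.mod_eq_of_lt (by omega)]
    omega

theorem Matrix.trace_pow_of_units_conj_eq_diagonal {n R : Type*} [Fintype n] [DecidableEq n]
    [CommSemiring R] {M : Matrix n n R} {h : (Matrix n n R)ˣ} {d : n → R}
    (hM : (↑h⁻¹ : Matrix n n R) * M * (↑h : Matrix n n R) = diagonal d) (k : ℕ) :
    (M ^ k).trace = ∑ i, d i ^ k := by
  rw [← trace_units_conj' h, ← Units.conj_pow', hM, diagonal_pow, trace_diagonal]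
  rfl

section RootsOfUnity

variable {K ι : Type*} [CommRing K] [IsDomain K] {ζ : K} {l : ℕ}

theorem IsPrimitiveRoot.sum_range_pow_pow (hζ : IsPrimitiveRoot ζ l) (m : ℕ) :
    ∑ k ∈ range l, (ζ ^ m) ^ k = if l ∣ m then (l : K) else 0 := by
  split_ifs with hm
  · simp [(hζ.pow_eq_one_iff_dvd m).2 hm]
  · refine eq_zero_of_ne_zero_of_mul_right_eq_zero
      (sub_ne_zero_of_ne (mt (hζ.pow_eq_one_iff_dvd m).1 hm)) ?_
    rw [geom_sum_mul, ← pow_mul, mul_comm, pow_mul, hζ.pow_eq_one, one_pow, sub_self]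

theorem IsPrimitiveRoot.natCast_mul_card_filter_mod_eq (hζ : IsPrimitiveRoot ζ l)
    (s : Finset ι) (a : ι → ℕ) {c : ℕ} (hc : c < l) :
    (l : K) * #{i ∈ s | a i % l = c} =
      ∑ k ∈ range l, ζ ^ ((l - c) * k) * ∑ i ∈ s, ζ ^ (a i * k) := by
  simp_rw [mul_sum, ← pow_add, ← add_mul]
  rw [sum_comm]
  simp_rw [pow_mul, hζ.sum_range_pow_pow, add_comm (l - c), ← Nat.mod_eq_iff_dvd_add_sub hc]
  rw [sum_ite, sum_const_zero, add_zero, sum_const, nsmul_eq_mul, mul_comm]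

theorem IsPrimitiveRoot.natCast_mul_card_filter_mod_eq_zero (hζ : IsPrimitiveRoot ζ l)
    (hl : 0 < l) (s : Finset ι) (a : ι → ℕ) :
    (l : K) * #{i ∈ s | a i % l = 0} = ∑ k ∈ range l, ∑ i ∈ s, ζ ^ (a i * k) := by
  simp_rw [hζ.natCast_mul_card_filter_mod_eq s a hl, Nat.sub_zero, pow_mul, hζ.pow_eq_one,
    one_pow, one_mul]

variable [CharZero K]

theorem IsPrimitiveRoot.map_mod_eq_of_sum_pow_eq (hζ : IsPrimitiveRoot ζ l) (hl : 0 < l)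
    {s : Finset ι} {a b : ι → ℕ} (h : ∀ k, ∑ i ∈ s, ζ ^ (a i * k) = ∑ i ∈ s, ζ ^ (b i * k)) :
    s.val.map (fun i => a i % l) = s.val.map (fun i => b i % l) := by
  ext c
  simp only [Multiset.count_map, ← Finset.filter_val, Finset.card_val, eq_comm (a := c)]
  rcases lt_or_ge c l with hc | hc
  · have hab := hζ.natCast_mul_card_filter_mod_eq s a hc
    simp_rw [h, ← hζ.natCast_mul_card_filter_mod_eq s b hc] at hab
    exact_mod_cast mul_left_cancel₀ (Nat.cast_ne_zero.2 hl.ne') hab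
  · rw [filter_false_of_mem fun i _ => (Nat.mod_lt _ hl).trans_le hc |>.ne,
      filter_false_of_mem fun i _ => (Nat.mod_lt _ hl).trans_le hc |>.ne]

/-- `hinv` says, through power sums, that the multiset of the `ζ ^ a i` is stable under inversion
`ζ ^ c ↦ ζ ^ ((l - 1) * c)`. -/
theorem IsPrimitiveRoot.two_mul_sum_eq_mul_card_ne_zero (hζ : IsPrimitiveRoot ζ l) (hl : 0 < l)
    {s : Finset ι} {a : ι → ℕ} (ha : ∀ i ∈ s, a i < l)
    (hinv : ∀ k, ∑ i ∈ s, ζ ^ (a i * ((l - 1) * k)) = ∑ i ∈ s, ζ ^ (a i * k)) :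
    2 * ∑ i ∈ s, a i = l * #{i ∈ s | a i ≠ 0} := by
  have hmap := hζ.map_mod_eq_of_sum_pow_eq hl (s := s) (a := a) (b := fun i => (l - a i) % l)
    fun k => (hinv k).symm.trans <| sum_congr rfl fun i hi => pow_eq_pow_of_modEq
      (by rw [← mul_assoc]; exact ((Nat.sub_mod_modEq_mul_pred (ha i hi).le).mul_right k).symm)
      hζ.pow_eq_one
  have hsymm : ∑ i ∈ s, a i = ∑ i ∈ s, (l - a i) % l := by
    simpa only [sum_eq_multiset_sum, Nat.mod_mod, Multiset.map_congr rfl fun i hi =>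
      Nat.mod_eq_of_lt (ha i hi)] using congrArg Multiset.sum hmap
  calc 2 * ∑ i ∈ s, a i = ∑ i ∈ s, (a i + (l - a i) % l) := by
        rw [two_mul, sum_add_distrib, ← hsymm]
    _ = ∑ i ∈ s, if a i = 0 then 0 else l :=
        sum_congr rfl fun i hi => Nat.add_sub_mod_eq_ite (ha i hi)
    _ = l * #{i ∈ s | a i ≠ 0} := by
        rw [sum_ite, sum_const_zero, zero_add, sum_const, smul_eq_mul, mul_comm]

end RootsOfUnity

namespace Equiv.Perm

variable {α : Type*} [Fintype α] [DecidableEq α]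

theorem trace_permMatrix {R : Type*} [NonAssocSemiring R] (σ : Perm α) :
    (σ.permMatrix R).trace = #{x | σ x = x} := by
  rw [Matrix.trace, Finset.natCast_card_filter]
  refine Finset.sum_congr rfl fun i _ => ?_
  simp [PEquiv.toMatrix_apply, eq_comm]

theorem permMatrix_pow {R : Type*} [Semiring R] (σ : Perm α) (k : ℕ) :
    (σ ^ k).permMatrix R = σ.permMatrix R ^ k := by
  simpa using map_pow (Matrix.permMatrixHom (n := α) (R := R)) σ⁻¹ k

theorem card_fixedPoints_pow_eq_sum_of_conj_diagonal {R : Type*} [CommSemiring R] {σ : Perm α}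
    {h : (Matrix α α R)ˣ} {d : α → R}
    (hσ : (↑h⁻¹ : Matrix α α R) * σ.permMatrix R * (↑h : Matrix α α R) = Matrix.diagonal d)
    (k : ℕ) : (#{x | (σ ^ k) x = x} : R) = ∑ i, d i ^ k := by
  rw [← trace_permMatrix, permMatrix_pow, Matrix.trace_pow_of_units_conj_eq_diagonal hσ]

theorem card_fixedPoints_pow_pred_orderOf_mul (g : Perm α) (k : ℕ) :
    #{x | (g ^ ((orderOf g - 1) * k)) x = x} = #{x | (g ^ k) x = x} := by
  have hinv : g ^ (orderOf g - 1) = g⁻¹ := eq_inv_of_mul_eq_one_left <| by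
    rw [pow_sub_one_mul (orderOf_pos g).ne', pow_orderOf_eq_one]
  simp_rw [pow_mul, hinv, inv_pow, inv_eq_iff_eq, eq_comm]

theorem sum_range_card_fixedPoints_pow (g : Perm α) :
    ∑ k ∈ range (orderOf g), #{x | (g ^ k) x = x} =
      orderOf g * Nat.card (MulAction.orbitRel.Quotient (Subgroup.zpowers g) α) := by
  classical
  have hfix (m : Subgroup.zpowers g) :
      Fintype.card (MulAction.fixedBy α m) = #{x | (m : Perm α) x = x} := by
    rw [← Fintype.card_subtype]
    rfl
  calc ∑ k ∈ range (orderOf g), #{x | (g ^ k) x = x}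
      = ∑ m : Subgroup.zpowers g, Fintype.card (MulAction.fixedBy α m) := by
        simp_rw [← Fin.sum_univ_eq_sum_range, hfix]
        exact Fintype.sum_equiv (finEquivZPowers (isOfFinOrder_of_finite g)) _ _ fun k => rfl
    _ = _ := by
        rw [MulAction.sum_card_fixedBy_eq_card_orbits_mul_card_group, Fintype.card_zpowers,
          Nat.card_eq_fintype_card, mul_comm]

end Equiv.Perm

/-- For a permutation `g ∈ S_n` viewed in `GL_n(ℂ)` via the standard permutation
representation, if `g` is diagonalized as `h⁻¹ g h = diag(ζ^{a 1}, …, ζ^{a n})` with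
`ζ = exp(2πi/l)`, `l = orderOf g` and `0 ≤ a i < l`, then twice the age
`(1/l) Σ a i` equals the index `n − #{orbits of g}`. -/
theorem two_age_eq_index {n l : ℕ} (hl : 0 < l) (g : Equiv.Perm (Fin n))
    (hord : orderOf g = l) (a : Fin n → ℕ) (ha : ∀ i, a i < l)
    (h : (Matrix (Fin n) (Fin n) ℂ)ˣ)
    (hdiag : (↑h⁻¹ : Matrix (Fin n) (Fin n) ℂ) * (g.permMatrix ℂ) * (↑h : Matrix (Fin n) (Fin n) ℂ)
      = Matrix.diagonal (fun i => Complex.exp (2 * Real.pi * Complex.I / l) ^ (a i))) :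
    2 * ((∑ i, (a i : ℚ)) / l) = (n : ℚ) - numOrbits g := by
  set ζ : ℂ := Complex.exp (2 * Real.pi * Complex.I / l)
  have hζ : IsPrimitiveRoot ζ l := Complex.isPrimitiveRoot_exp l hl.ne'
  have hfix (k : ℕ) : (#{x | (g ^ k) x = x} : ℂ) = ∑ i, ζ ^ (a i * k) := by
    simp_rw [Equiv.Perm.card_fixedPoints_pow_eq_sum_of_conj_diagonal hdiag, pow_mul]
  have htwice : 2 * ∑ i, a i = l * #{i | a i ≠ 0} :=
    hζ.two_mul_sum_eq_mul_card_ne_zero hl (fun i _ => ha i) fun k => by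
      rw [← hfix, ← hfix, ← hord, g.card_fixedPoints_pow_pred_orderOf_mul]
  have hzero : #{i | a i = 0} = numOrbits g := by
    have hl_mul := hζ.natCast_mul_card_filter_mod_eq_zero hl univ a
    simp_rw [← hfix, Nat.mod_eq_of_lt (ha _), ← Nat.cast_sum, ← hord,
      g.sum_range_card_fixedPoints_pow] at hl_mul
    exact Nat.eq_of_mul_eq_mul_left (hord ▸ hl) (by exact_mod_cast hl_mul)
  have hcard : #{i | a i = 0} + #{i | a i ≠ 0} = n := by
    simpa using card_filter_add_card_filter_not (s := univ) (a · = 0)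
  have hn : (n : ℚ) = numOrbits g + #{i | a i ≠ 0} := by
    rw [← hzero]
    exact_mod_cast hcard.symm
  have htwice' : 2 * ∑ i, (a i : ℚ) = l * #{i | a i ≠ 0} := by exact_mod_cast htwice
  rw [hn, add_sub_cancel_left, mul_div_assoc', htwice',
    mul_div_cancel_left₀ _ (by exact_mod_cast hl.ne')]
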